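/- arXiv:0902.1218 — 4 statements merged into one kernel-verified Lean document; each statement's English description precedes it below -/
import Mathlib

section
/- Let p be a prime, n ≥ 3, and 1 ≤ k, l ≤ n−1. Let V be a k-dimensional ℚ_p-subspace of ℚ_p^n, let W be an l-dimensional ℚ_p-subspace of ℚ_p^n, and let K ≤ SL_n(ℤ_p) be a subgroup of finite index. If every g ∈ K with gV = V also satisfies gW = W, then l = k and W = V. -/
/-!
After clearing denominators, every transvection `x ↦ x + f x • v` (`f v = 0`) of `ℚ_p^n` along a
suitable nonzero multiple of `v` comes from some `g ∈ SL_n(ℤ_p)`, and a power `g ^ m` lies in `K`.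
As `g ^ m` is again a transvection along a nonzero multiple of `v`, with the same invariant
subspaces, every transvection stabilizing `V` stabilizes `W`.

This alone forces `W = V` once `0 ≠ W ≠ ℚ_p^n`. For `x ∈ V` and `0 ≠ w ∈ W` off the line of `x`,
pick `f` with `f x = 0 ≠ f w`: the transvection along `x` stabilizes `V`, hence `W`, so
`f w • x ∈ W`. If moreover `w ∉ V ≤ W`, the same argument with `f` vanishing on `V + ℚ_p x`
puts every `x` into `W`.
-/

open scoped MatrixGroups

/-- The image of a `ℚ_p`-subspace of `ℚ_p^n` under the matrix `g`. -/
noncomputable def matActP {p : ℕ} [Fact p.Prime] {n : ℕ} (g : Matrix (Fin n) (Fin n) ℚ_[p])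
    (V : Submodule ℚ_[p] (Fin n → ℚ_[p])) : Submodule ℚ_[p] (Fin n → ℚ_[p]) :=
  V.map g.mulVecLin

/-- A matrix in `SL_n(ℤ_p)`, viewed as a `p`-adic matrix. -/
noncomputable def pMat {p : ℕ} [Fact p.Prime] {n : ℕ}
    (g : Matrix.SpecialLinearGroup (Fin n) ℤ_[p]) : Matrix (Fin n) (Fin n) ℚ_[p] :=
  (g : Matrix (Fin n) (Fin n) ℤ_[p]).map ((↑) : ℤ_[p] → ℚ_[p])

open Module LinearMap

theorem IsLocalization.exists_matrix_map_eq_smul {R S : Type*} [CommRing R] [CommRing S]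
    [Algebra R S] (M : Submonoid R) [IsLocalization M S] {m n : Type*} [Finite m] [Finite n]
    (N : Matrix m n S) : ∃ b : M, ∃ A : Matrix m n R, A.map (algebraMap R S) = (b : R) • N := by
  obtain ⟨b, hb⟩ := exist_integer_multiples_of_finite M fun ij : m × n => N ij.1 ij.2
  choose A hA using hb
  exact ⟨b, Matrix.of fun i j => A (i, j), by ext i j; exact hA (i, j)⟩

theorem LinearMap.transvection.pow {R V : Type*} [Semiring R] [AddCommMonoid V] [Module R V]
    {f : Dual R V} {v : V} (hfv : f v = 0) (m : ℕ) :
    transvection f v ^ m = transvection f (m • v) := by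
  induction m with
  | zero => simp [Module.End.one_eq_id]
  | succ m ih =>
    rw [pow_succ', ih, Module.End.mul_eq_comp, comp_of_left_eq (by simp [hfv]), succ_nsmul']

section Transvection

variable {K E : Type*} [Field K] [AddCommGroup E] [Module K E]

theorem Submodule.map_transvection_eq_self_iff {U : Submodule K E} {f : Dual K E} {v : E}
    (hfv : f v = 0) : U.map (transvection f v) = U ↔ ∀ x ∈ U, f x • v ∈ U := by
  refine ⟨fun h x hx => ?_, fun h => le_antisymm ?_ fun x hx => ?_⟩
  · have hx' : transvection f v x ∈ U := h ▸ Submodule.mem_map_of_mem hx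
    exact (U.add_mem_iff_right hx).1 hx'
  · rintro _ ⟨x, hx, rfl⟩
    exact U.add_mem hx (h x hx)
  · refine ⟨x - f x • v, U.sub_mem hx (h x hx), ?_⟩
    simp [transvection.apply, hfv]

theorem Submodule.map_transvection_smul_eq_self_iff {U : Submodule K E} {f : Dual K E} {v : E}
    (hfv : f v = 0) {a : K} (ha : a ≠ 0) :
    U.map (transvection f (a • v)) = U ↔ U.map (transvection f v) = U := by
  rw [map_transvection_eq_self_iff hfv, map_transvection_eq_self_iff (by simp [hfv])]
  simp_rw [smul_comm _ a, U.smul_mem_iff ha]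

variable {V W : Submodule K E}
  (hVW : ∀ (f : Dual K E) (v : E), f v = 0 →
    V.map (transvection f v) = V → W.map (transvection f v) = W)
include hVW

theorem Submodule.le_of_transvection_stabilizer_le (hW : W ≠ ⊥) : V ≤ W := by
  obtain ⟨w, hw, hw0⟩ := W.ne_bot_iff.1 hW
  intro x hx
  by_cases hwx : w ∈ K ∙ x
  · obtain ⟨c, rfl⟩ := mem_span_singleton.1 hwx
    exact (W.smul_mem_iff (left_ne_zero_of_smul hw0)).1 hw
  · obtain ⟨f, hfw, hf⟩ := exists_dual_map_eq_bot_of_notMem hwx inferInstance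
    have hfx : f x = 0 := le_ker_iff_map.2 hf (mem_span_singleton_self x)
    have hW := hVW f x hfx ((map_transvection_eq_self_iff hfx).2 fun y _ => V.smul_mem _ hx)
    exact (W.smul_mem_iff hfw).1 ((map_transvection_eq_self_iff hfx).1 hW w hw)

theorem Submodule.eq_top_of_transvection_stabilizer_le (hlt : V < W) : W = ⊤ := by
  obtain ⟨w, hw, hwV⟩ := SetLike.exists_of_lt hlt
  refine eq_top_iff'.2 fun x => ?_
  by_cases hwx : w ∈ V ⊔ (K ∙ x)
  · obtain ⟨y, hy, _, hz, rfl⟩ := mem_sup.1 hwx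
    obtain ⟨c, rfl⟩ := mem_span_singleton.1 hz
    have hc : c ≠ 0 := by rintro rfl; simp_all
    have hcx : c • x ∈ W := by simpa using W.sub_mem hw (hlt.le hy)
    exact (W.smul_mem_iff hc).1 hcx
  · obtain ⟨f, hfw, hf⟩ := exists_dual_map_eq_bot_of_notMem hwx inferInstance
    have hf0 : ∀ y ∈ V ⊔ (K ∙ x), f y = 0 := fun y hy => le_ker_iff_map.2 hf hy
    have hfx : f x = 0 := hf0 x (mem_sup_right (mem_span_singleton_self x))
    have hW := hVW f x hfx <| (map_transvection_eq_self_iff hfx).2 fun y hy => by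
      simp [hf0 y (mem_sup_left hy)]
    exact (W.smul_mem_iff hfw).1 ((map_transvection_eq_self_iff hfx).1 hW w hw)

theorem Submodule.eq_of_transvection_stabilizer_le (hbot : W ≠ ⊥) (htop : W ≠ ⊤) : W = V :=
  ((le_of_transvection_stabilizer_le hVW hbot).lt_or_eq.resolve_left
    fun hlt => htop (eq_top_of_transvection_stabilizer_le hVW hlt)).symm

end Transvection

variable {p : ℕ} [Fact p.Prime] {n : ℕ}

theorem pMat_pow (g : Matrix.SpecialLinearGroup (Fin n) ℤ_[p]) (m : ℕ) :
    pMat (g ^ m) = pMat g ^ m := by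
  simp only [pMat, Matrix.SpecialLinearGroup.coe_pow]
  exact map_pow (PadicInt.Coe.ringHom (p := p)).mapMatrix _ m

theorem exists_toLin'_pMat_eq_transvection {f : Dual ℚ_[p] (Fin n → ℚ_[p])}
    {v : Fin n → ℚ_[p]} (hfv : f v = 0) :
    ∃ c : ℚ_[p], c ≠ 0 ∧ ∃ g : Matrix.SpecialLinearGroup (Fin n) ℤ_[p],
      Matrix.toLin' (pMat g) = transvection f (c • v) := by
  obtain ⟨⟨b, hb⟩, A, hA⟩ := IsLocalization.exists_matrix_map_eq_smul (nonZeroDivisors ℤ_[p])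
    (toMatrix' (f.smulRight v))
  set c : ℚ_[p] := (b : ℚ_[p])
  have hc : c ≠ 0 := PadicInt.coe_ne_zero.2 (nonZeroDivisors.ne_zero hb)
  have hA' :
      (algebraMap ℤ_[p] ℚ_[p]).mapMatrix (1 + A) = toMatrix' (transvection f (c • v)) := by
    have hT : transvection f (c • v) = 1 + c • f.smulRight v := by
      ext x; simp [transvection.apply, smul_comm c]
    rw [map_add, map_one, RingHom.mapMatrix_apply, hA, hT, map_add, toMatrix'_one, map_smul]
    rfl
  have hdet : (1 + A).det = 1 := by
    apply IsFractionRing.injective ℤ_[p] ℚ_[p]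
    rw [RingHom.map_det, hA', ← LinearMap.det_toLin', Matrix.toLin'_toMatrix', transvection.det]
    simp [hfv]
  exact ⟨c, hc, ⟨1 + A, hdet⟩, by rw [← Matrix.toLin'_toMatrix' (transvection f _), ← hA']; rfl⟩

theorem transvection_stabilizer_le_of_stabilizer_le {V W : Submodule ℚ_[p] (Fin n → ℚ_[p])}
    {K : Subgroup (Matrix.SpecialLinearGroup (Fin n) ℤ_[p])} (hK : K.FiniteIndex)
    (hstab : ∀ g ∈ K, matActP (pMat g) V = V → matActP (pMat g) W = W)
    (f : Dual ℚ_[p] (Fin n → ℚ_[p])) (v : Fin n → ℚ_[p]) (hfv : f v = 0)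
    (hV : V.map (transvection f v) = V) : W.map (transvection f v) = W := by
  obtain ⟨c, hc, g, hg⟩ := exists_toLin'_pMat_eq_transvection hfv
  obtain ⟨m, hm, -, hgm⟩ := Subgroup.exists_pow_mem_of_index_ne_zero hK.index_ne_zero g
  have ha : (m * c : ℚ_[p]) ≠ 0 := mul_ne_zero (Nat.cast_ne_zero.2 hm.ne') hc
  have hgm' : (pMat (g ^ m)).mulVecLin = transvection f ((m * c : ℚ_[p]) • v) := by
    rw [← Matrix.toLin'_apply', pMat_pow, Matrix.toLin'_pow, hg,
      transvection.pow (by simp [hfv]), mul_smul, Nat.cast_smul_eq_nsmul]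
  have hW := hstab _ hgm <| by
    rwa [matActP, hgm', Submodule.map_transvection_smul_eq_self_iff hfv ha]
  rwa [matActP, hgm', Submodule.map_transvection_smul_eq_self_iff hfv ha] at hW

theorem stabilizer_subset_eq_general (p n k l : ℕ) [Fact p.Prime]
    (hl1 : 1 ≤ l) (hl2 : l ≤ n - 1)
    (V W : Submodule ℚ_[p] (Fin n → ℚ_[p]))
    (hV : Module.finrank ℚ_[p] V = k) (hW : Module.finrank ℚ_[p] W = l)
    (K : Subgroup (Matrix.SpecialLinearGroup (Fin n) ℤ_[p])) (hK : K.FiniteIndex)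
    (hstab : ∀ g ∈ K, matActP (pMat g) V = V → matActP (pMat g) W = W) :
    l = k ∧ W = V := by
  have hbot : W ≠ ⊥ := by
    rintro rfl
    rw [finrank_bot] at hW
    omega
  have htop : W ≠ ⊤ := by
    rintro rfl
    rw [finrank_top, Module.finrank_fin_fun] at hW
    omega
  have hWV := Submodule.eq_of_transvection_stabilizer_le
    (transvection_stabilizer_le_of_stabilizer_le hK hstab) hbot htop
  exact ⟨by rw [← hW, ← hV, hWV], hWV⟩

/-- **Proposition 2.5.**  Let `n ≥ 3`, `V ∈ Gr_k(ℚ_p^n)`, `W ∈ Gr_l(ℚ_p^n)` and let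
`K ≤ SL_n(ℤ_p)` be a finite-index subgroup.  If the stabilizer of `V` in `K` is
contained in the stabilizer of `W`, then `l = k` and `W = V`. -/
theorem stabilizer_subset_eq (p n k l : ℕ) [Fact p.Prime] (hn : 3 ≤ n)
    (hk1 : 1 ≤ k) (hk2 : k ≤ n - 1) (hl1 : 1 ≤ l) (hl2 : l ≤ n - 1)
    (V W : Submodule ℚ_[p] (Fin n → ℚ_[p]))
    (hV : Module.finrank ℚ_[p] V = k) (hW : Module.finrank ℚ_[p] W = l)
    (K : Subgroup (Matrix.SpecialLinearGroup (Fin n) ℤ_[p])) (hK : K.FiniteIndex)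
    (hstab : ∀ g ∈ K, matActP (pMat g) V = V → matActP (pMat g) W = W) :
    l = k ∧ W = V :=
  stabilizer_subset_eq_general p n k l hl1 hl2 V W hV hW K hK hstab
end

section
/- Let p be a prime, n ≥ 3, and let Γ ≤ SL_n(ℤ) be a subgroup of finite index. Then there exists t ≥ 1 such that the principal congruence subgroup K_{p^t} of SL_n(ℤ_p) is contained in the closure of Γ in SL_n(ℤ_p). Consequently, for every 0 ≤ k ≤ n and every V ∈ Gr_k(ℚ_p^n), the ergodic component cl(Γ)·V of V (the orbit of V under the closure of Γ) contains the principal congruence component K_{p^t}·V. -/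
open scoped MatrixGroups

/-- The topology on `SL_n(ℤ_p)` (as a closed subspace of the `p`-adic matrices). -/
noncomputable instance (p n : ℕ) [Fact p.Prime] :
    TopologicalSpace (Matrix.SpecialLinearGroup (Fin n) ℤ_[p]) :=
  (inferInstance : TopologicalSpace {A : Matrix (Fin n) (Fin n) ℤ_[p] // A.det = 1})

/-- The canonical embedding `SL_n(ℤ) → SL_n(ℤ_p)`. -/
noncomputable def iotaSL (p n : ℕ) [Fact p.Prime] :
    Matrix.SpecialLinearGroup (Fin n) ℤ →* Matrix.SpecialLinearGroup (Fin n) ℤ_[p] :=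
  Matrix.SpecialLinearGroup.map (Int.castRingHom ℤ_[p])

/-- The congruence subgroup `K_{p^t} ≤ SL_n(ℤ_p)`, as a set. -/
def congSetP (p n : ℕ) [Fact p.Prime] (t : ℕ) :
    Set (Matrix.SpecialLinearGroup (Fin n) ℤ_[p]) :=
  {g | ∀ i j, (p : ℤ_[p]) ^ t ∣
    ((g : Matrix (Fin n) (Fin n) ℤ_[p]) i j - (1 : Matrix (Fin n) (Fin n) ℤ_[p]) i j)}

/-!
Since `ℤ` is dense in `ℤ_p`, the closure of `SL_n(ℤ)` contains every transvection `1 + c E_ij`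
and, by Whitehead's identity, every `diag(u, u⁻¹)` with `u ∈ ℤ_pˣ`. If `N` is the index of the
normal core of `Γ`, then `x ^ N ∈ cl(Γ)` for every `x` in the closure of `SL_n(ℤ)`, so `cl(Γ)`
contains the transvections `1 + N c E_ij` and the matrices `diag(u ^ N, u⁻¹ ^ N)`.
For `t = 2 v_p(N) + 1` we have `N ∣ p ^ t`, and Hensel's lemma makes every `u ≡ 1 mod p ^ t` an
`N`-th power; hence `cl(Γ)` contains all transvections and all `diag(u, u⁻¹)` lying in `K_{p^t}`.
These generate `K_{p^t}`: the diagonal entries of its elements are units, so Gaussian elimination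
by such transvections makes any element diagonal, and a diagonal element of determinant `1` is a
product of matrices `diag(u, u⁻¹)`.
-/

open Matrix

lemma Subgroup.pow_index_normalCore_mem_topologicalClosure_map {A G : Type*} [Group A] [Group G]
    [TopologicalSpace G] [IsTopologicalGroup G] (φ : A →* G) (Γ : Subgroup A) {x : G}
    (hx : x ∈ φ.range.topologicalClosure) :
    x ^ Γ.normalCore.index ∈ (Γ.map φ).topologicalClosure :=
  map_mem_closure (f := fun y => y ^ Γ.normalCore.index) (continuous_pow _) hx <| by
    rintro _ ⟨a, rfl⟩
    exact ⟨a ^ Γ.normalCore.index, Γ.normalCore_le (Γ.normalCore.pow_index_mem a), map_pow φ a _⟩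

lemma Matrix.single_eq_vecMulVec_single {ι R : Type*} [DecidableEq ι] [MulZeroOneClass R]
    (i k : ι) (c : R) : single i k c = vecMulVec (Pi.single i c) (Pi.single k 1) := by
  ext a b
  simp only [single_apply, vecMulVec_apply, Pi.single_apply]
  split_ifs <;> simp_all

namespace Matrix.SpecialLinearGroup

variable {ι R : Type*} [Fintype ι] [DecidableEq ι] [CommRing R]

def diagPair (i j : ι) : Rˣ →* SpecialLinearGroup ι R where
  toFun u := ⟨diagonal (Pi.mulSingle i (u : R) * Pi.mulSingle j ((u⁻¹ : Rˣ) : R)), by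
    simp [det_diagonal, Finset.prod_mul_distrib, Finset.prod_pi_mulSingle']⟩
  map_one' := by ext; simp
  map_mul' u v := by
    ext a b
    change diagonal _ a b = (diagonal _ * diagonal _ : Matrix ι ι R) a b
    simp only [diagonal_mul_diagonal, mul_inv, Units.val_mul, Pi.mulSingle_mul, diagonal_apply,
      Pi.mul_apply]
    split_ifs <;> ring

lemma diagPair_coe (i j : ι) (u : Rˣ) :
    (diagPair i j u : Matrix ι ι R) =
      diagonal (Pi.mulSingle i (u : R) * Pi.mulSingle j ((u⁻¹ : Rˣ) : R)) := rfl

lemma diagPair_self (i : ι) (u : Rˣ) : diagPair i i u = (1 : SpecialLinearGroup ι R) := by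
  ext a b
  simp [diagPair_coe, ← Pi.mulSingle_mul]

lemma diagPair_inv (i j : ι) (u : Rˣ) : (diagPair i j u)⁻¹ = diagPair j i u := by
  rw [← map_inv]
  ext a b
  simp only [diagPair_coe, inv_inv, mul_comm]

lemma diagPair_eq_transvection_mul {i j : ι} (hij : i ≠ j) (u : Rˣ) :
    diagPair i j u = transvection hij.symm ((u⁻¹ : Rˣ) - 1 : R) * transvection hij 1 *
      transvection hij.symm ((u : R) - 1) * transvection hij (-(u⁻¹ : Rˣ) : R) := by
  have huw := u.mul_inv
  ext a b
  simp only [coe_mul, transvection_coe, diagPair_coe, mul_add, mul_one, add_mul, one_mul, single_mul_single_same, ne_eq, hij,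
    not_false_eq_true, single_mul_single_of_ne, add_zero, mul_neg, hij.symm, add_apply, one_apply,
    single_apply, diagonal_apply, Pi.mul_apply, Pi.mulSingle_apply, mul_ite, ite_mul]
  split_ifs <;> grind

lemma transvection_natCast_mul {i j : ι} (hij : i ≠ j) (N : ℕ) (c : R) :
    transvection hij (N * c) = transvection hij c ^ N := by
  induction N with
  | zero => simp
  | succ N ih => rw [Nat.cast_succ, add_one_mul, transvection_add, ih, pow_succ]

lemma map_transvection {A : Type*} [CommRing A] (f : A →+* R) {i j : ι} (hij : i ≠ j) (a : A) :
    map f (transvection hij a) = transvection hij (f a) := by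
  ext x y
  simp only [map_apply_coe, RingHom.mapMatrix_apply, map_apply, transvection_coe, add_apply,
    one_apply, single_apply]
  split_ifs <;> simp

lemma eq_one_of_isDiag {d : SpecialLinearGroup ι R} (hd : (d : Matrix ι ι R).IsDiag) {j₀ : ι}
    (hone : ∀ i ≠ j₀, d i i = 1) : d = 1 := by
  have hj₀ : d j₀ j₀ = 1 := by
    have hdet := d.det_coe
    rwa [← hd.diagonal_diag, det_diagonal,
      Finset.prod_eq_single (f := (d : Matrix ι ι R).diag) j₀ (fun i _ hi => hone i hi)
        (by simp)] at hdet
  ext a b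
  rw [← hd.diagonal_diag, coe_one, diagonal_apply, one_apply]
  split_ifs with hab
  · by_cases ha : a = j₀
    · rwa [ha]
    · exact hone a ha
  · rfl

section Congruence

def congruenceSubgroup (I : Ideal R) : Subgroup (SpecialLinearGroup ι R) :=
  (map (Ideal.Quotient.mk I)).ker

variable {I : Ideal R}

lemma mem_congruenceSubgroup_iff {g : SpecialLinearGroup ι R} :
    g ∈ congruenceSubgroup I ↔ ∀ i j, g i j - (1 : Matrix ι ι R) i j ∈ I := by
  simp only [congruenceSubgroup, MonoidHom.mem_ker, SpecialLinearGroup.ext_iff, map_apply_coe,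
    RingHom.mapMatrix_apply, map_apply, coe_one, ← Ideal.Quotient.eq]
  constructor <;> intro h i j <;> simpa [one_apply, apply_ite (Ideal.Quotient.mk I)] using h i j

lemma sub_one_apply_mem {g : SpecialLinearGroup ι R} (hg : g ∈ congruenceSubgroup I) (i j : ι) :
    g i j - (1 : Matrix ι ι R) i j ∈ I :=
  mem_congruenceSubgroup_iff.1 hg i j

lemma apply_mem_of_ne {g : SpecialLinearGroup ι R} (hg : g ∈ congruenceSubgroup I) {i j : ι}
    (hij : i ≠ j) : g i j ∈ I := by
  simpa [one_apply_ne hij] using sub_one_apply_mem hg i j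

lemma isUnit_apply_self (hI : I ≤ Ideal.jacobson ⊥) {g : SpecialLinearGroup ι R}
    (hg : g ∈ congruenceSubgroup I) (i : ι) : IsUnit (g i i) := by
  simpa using Ideal.mem_jacobson_bot.1 (hI (sub_one_apply_mem hg i i)) 1

lemma diagPair_mem_congruenceSubgroup (i j : ι) {u : Rˣ} (hu : (u : R) - 1 ∈ I) :
    diagPair i j u ∈ congruenceSubgroup I := by
  have hu' : ((u⁻¹ : Rˣ) : R) - 1 ∈ I := by
    rw [show ((u⁻¹ : Rˣ) : R) - 1 = -(u⁻¹ : Rˣ) * ((u : R) - 1) by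
      rw [mul_sub, neg_mul, Units.inv_mul]; ring]
    exact I.mul_mem_left _ hu
  rw [mem_congruenceSubgroup_iff]
  intro a b
  simp only [diagPair_coe, diagonal_apply, one_apply, Pi.mul_apply, Pi.mulSingle_apply]
  split_ifs <;> simp_all

variable {H : Subgroup (SpecialLinearGroup ι R)}

lemma exists_mem_coe_eq_one_add_vecMulVec
    (htrans : ∀ i j (hij : i ≠ j), ∀ c ∈ I, transvection hij c ∈ H) {k : ι} {c : ι → R}
    (hck : c k = 0) (hc : ∀ i, c i ∈ I) :
    ∃ h ∈ H, (h : Matrix ι ι R) = 1 + vecMulVec c (Pi.single k 1) := by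
  suffices c k = 0 ∧ ∃ h ∈ H, (h : Matrix ι ι R) = 1 + vecMulVec c (Pi.single k 1) from this.2
  rw [← Finset.univ_sum_single c]
  refine Finset.sum_induction _
    (fun x => x k = 0 ∧ ∃ h ∈ H, (h : Matrix ι ι R) = 1 + vecMulVec x (Pi.single k 1)) ?_ ?_ ?_
  · rintro x y ⟨hxk, g, hg, hgx⟩ ⟨hyk, h, hh, hhy⟩
    refine ⟨by simp [hxk, hyk], g * h, mul_mem hg hh, ?_⟩
    -- the cross term vanishes because `y k = 0`
    rw [coe_mul, hgx, hhy, add_mul, mul_add, mul_add, vecMulVec_mul_vecMulVec]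
    simp only [mul_one, one_mul, single_dotProduct, hyk, zero_smul, vecMulVec_zero, add_zero,
      add_vecMulVec]
    abel
  · exact ⟨rfl, 1, one_mem H, by simp⟩
  · intro i _
    by_cases hik : i = k
    · subst hik
      exact ⟨by simp [hck], 1, one_mem H, by simp [hck]⟩
    · refine ⟨by simp [Ne.symm hik], transvection hik (c i), htrans i k hik _ (hc i), ?_⟩
      rw [transvection_coe, single_eq_vecMulVec_single]

lemma exists_mem_mul_col_eq_zero (hI : I ≤ Ideal.jacobson ⊥)
    (htrans : ∀ i j (hij : i ≠ j), ∀ c ∈ I, transvection hij c ∈ H)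
    {g : SpecialLinearGroup ι R} (hg : g ∈ congruenceSubgroup I) (k : ι) :
    ∃ h ∈ H, h * g ∈ congruenceSubgroup I ∧ (∀ i ≠ k, (h * g) i k = 0) ∧
      ∀ j, (∀ i ≠ j, g i j = 0) → ∀ i ≠ j, (h * g) i j = 0 := by
  obtain ⟨u, hu⟩ := isUnit_apply_self hI hg k
  set c : ι → R := Function.update (fun i => -g i k * (u⁻¹ : Rˣ)) k 0 with hc
  have hck : c k = 0 := Function.update_self ..
  have hcI : ∀ i, c i ∈ I := by
    intro i
    by_cases hik : i = k
    · rw [hik, hck]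
      exact I.zero_mem
    · rw [hc, Function.update_of_ne hik]
      exact I.mul_mem_right _ (I.neg_mem (apply_mem_of_ne hg hik))
  obtain ⟨h, hH, hh⟩ := exists_mem_coe_eq_one_add_vecMulVec htrans hck hcI
  have hhI : h ∈ congruenceSubgroup I := by
    rw [mem_congruenceSubgroup_iff]
    intro a b
    rw [hh, add_apply, add_sub_cancel_left, vecMulVec_apply]
    exact I.mul_mem_right _ (hcI a)
  have hentry : ∀ i j, (h * g) i j = g i j + c i * g k j := by
    intro i j
    rw [coe_mul, hh, add_mul, one_mul, vecMulVec_mul, single_one_vecMul]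
    rfl
  refine ⟨h, hH, mul_mem hhI hg, fun i hik => ?_, fun j hj i hij => ?_⟩
  · rw [hentry, hc, Function.update_of_ne hik, ← hu, mul_assoc, Units.inv_mul, mul_one,
      add_neg_cancel]
  · rw [hentry, hj i hij]
    by_cases hjk : j = k
    · subst hjk
      rw [hc, Function.update_of_ne hij, hj i hij]
      ring
    · rw [hj k (Ne.symm hjk), mul_zero, add_zero]

lemma mem_of_mem_congruenceSubgroup_of_isDiag (hI : I ≤ Ideal.jacobson ⊥)
    (hdiag : ∀ i j (u : Rˣ), (u : R) - 1 ∈ I → diagPair i j u ∈ H)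
    {d : SpecialLinearGroup ι R} (hd : d ∈ congruenceSubgroup I)
    (hdd : (d : Matrix ι ι R).IsDiag) : d ∈ H := by
  rcases isEmpty_or_nonempty ι with hι | ⟨⟨j₀⟩⟩
  · convert one_mem H
    ext a
    exact isEmptyElim a
  suffices ∀ s : Finset ι, ∀ d ∈ congruenceSubgroup I, (d : Matrix ι ι R).IsDiag →
      (∀ i ∉ s, i ≠ j₀ → d i i = 1) → d ∈ H from
    this Finset.univ d hd hdd (by simp)
  intro s
  induction s using Finset.induction_on with
  | empty =>
    intro d _ hdd hone
    rw [eq_one_of_isDiag hdd fun i => hone i (Finset.notMem_empty i)]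
    exact one_mem H
  | insert a s ha ih =>
    intro d hd hdd hone
    by_cases haj : a = j₀
    · refine ih d hd hdd fun i hi hij => hone i ?_ hij
      simp [Finset.mem_insert, haj, hij, hi]
    obtain ⟨u, hu⟩ := isUnit_apply_self hI hd a
    have hu1 : (u : R) - 1 ∈ I := by simpa [hu] using sub_one_apply_mem hd a a
    have hentry : ∀ x y, ((diagPair a j₀ u)⁻¹ * d) x y =
        (Pi.mulSingle j₀ (u : R) : ι → R) x * (Pi.mulSingle a ((u⁻¹ : Rˣ) : R) : ι → R) x *
          d x y := by
      intro x y
      rw [diagPair_inv, coe_mul, diagPair_coe, diagonal_mul, Pi.mul_apply]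
    have hd' : (diagPair a j₀ u)⁻¹ * d ∈ H := by
      refine ih _ (mul_mem (inv_mem (diagPair_mem_congruenceSubgroup a j₀ hu1)) hd)
        (fun x y hxy => (hentry x y).trans (by rw [hdd hxy, mul_zero])) fun x hx hxj => ?_
      rw [hentry, Pi.mulSingle_eq_of_ne hxj, one_mul]
      by_cases hxa : x = a
      · rw [hxa, Pi.mulSingle_eq_same, ← hu, Units.inv_mul]
      · rw [Pi.mulSingle_eq_of_ne hxa, one_mul]
        exact hone x (by simp [hxa, hx]) hxj
    rw [← mul_inv_cancel_left (diagPair a j₀ u) d]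
    exact mul_mem (hdiag a j₀ u hu1) hd'

theorem congruenceSubgroup_le_of_transvection_mem_of_diagPair_mem (hI : I ≤ Ideal.jacobson ⊥)
    (htrans : ∀ i j (hij : i ≠ j), ∀ c ∈ I, transvection hij c ∈ H)
    (hdiag : ∀ i j (u : Rˣ), (u : R) - 1 ∈ I → diagPair i j u ∈ H) :
    congruenceSubgroup I ≤ H := by
  suffices ∀ s : Finset ι, ∀ g ∈ congruenceSubgroup I, (∀ j ∉ s, ∀ i ≠ j, g i j = 0) → g ∈ H from
    fun g hg => this Finset.univ g hg (by simp)
  intro s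
  induction s using Finset.induction_on with
  | empty =>
    exact fun g hg hcol => mem_of_mem_congruenceSubgroup_of_isDiag hI hdiag hg
      fun i j hij => hcol j (Finset.notMem_empty j) i hij
  | insert k s hk ih =>
    intro g hg hcol
    obtain ⟨h, hH, hhg, hk0, hclean⟩ := exists_mem_mul_col_eq_zero hI htrans hg k
    have : h * g ∈ H := by
      refine ih _ hhg fun j hj i hij => ?_
      by_cases hjk : j = k
      · exact hjk ▸ hk0 i (hjk ▸ hij)
      · exact hclean j (hcol j (by simp [hjk, hj])) i hij
    simpa using mul_mem (inv_mem hH) this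

end Congruence

section Closure

variable {A : Type*} [CommRing A] [TopologicalSpace R] [IsTopologicalRing R] {f : A →+* R}

lemma continuous_transvection {i j : ι} (hij : i ≠ j) :
    Continuous (transvection hij : R → SpecialLinearGroup ι R) := by
  refine continuous_induced_rng.2 (continuous_matrix fun a b => ?_)
  change Continuous fun c : R => ((1 : Matrix ι ι R) + single i j c) a b
  simp only [add_apply, single_apply]
  split_ifs <;> fun_prop

lemma transvection_mem_closure_range_map (hf : DenseRange f) {i j : ι} (hij : i ≠ j) (c : R) :
    transvection hij c ∈ (map f : SpecialLinearGroup ι A →* _).range.topologicalClosure :=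
  map_mem_closure (continuous_transvection hij) (hf.closure_range ▸ Set.mem_univ c)
    (by rintro _ ⟨a, rfl⟩; exact ⟨transvection hij a, map_transvection f hij a⟩)

lemma diagPair_mem_closure_range_map (hf : DenseRange f) (i j : ι) (u : Rˣ) :
    diagPair i j u ∈ (map f : SpecialLinearGroup ι A →* _).range.topologicalClosure := by
  by_cases hij : i = j
  · rw [hij, diagPair_self]
    exact one_mem _
  rw [diagPair_eq_transvection_mul hij u]
  refine mul_mem (mul_mem (mul_mem ?_ ?_) ?_) ?_ <;>
    exact transvection_mem_closure_range_map hf _ _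

lemma transvection_natCast_index_mul_mem (hf : DenseRange f)
    (Γ : Subgroup (SpecialLinearGroup ι A)) {i j : ι} (hij : i ≠ j) (c : R) :
    transvection hij (Γ.normalCore.index * c) ∈ (Γ.map (map f)).topologicalClosure := by
  rw [transvection_natCast_mul]
  exact Subgroup.pow_index_normalCore_mem_topologicalClosure_map _ Γ
    (transvection_mem_closure_range_map hf hij c)

lemma diagPair_pow_index_mem (hf : DenseRange f) (Γ : Subgroup (SpecialLinearGroup ι A))
    (i j : ι) (u : Rˣ) :
    diagPair i j (u ^ Γ.normalCore.index) ∈ (Γ.map (map f)).topologicalClosure := by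
  rw [map_pow]
  exact Subgroup.pow_index_normalCore_mem_topologicalClosure_map _ Γ
    (diagPair_mem_closure_range_map hf i j u)

end Closure

end Matrix.SpecialLinearGroup

namespace PadicInt

variable {p : ℕ} [Fact p.Prime]

lemma natCast_dvd_p_pow {N : ℕ} (hN : N ≠ 0) {t : ℕ} (ht : (N : ℤ_[p]).valuation ≤ t) :
    (N : ℤ_[p]) ∣ (p : ℤ_[p]) ^ t := by
  rw [unitCoeff_spec (Nat.cast_ne_zero.2 hN), Units.mul_left_dvd]
  exact pow_dvd_pow _ ht

theorem exists_pow_eq_of_p_pow_dvd_sub_one {N : ℕ} (hN : N ≠ 0) {u : ℤ_[p]}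
    (hu : (p : ℤ_[p]) ^ (2 * (N : ℤ_[p]).valuation + 1) ∣ u - 1) : ∃ x, x ^ N = u := by
  have hp : (1 : ℝ) < p := by exact_mod_cast (Fact.out : p.Prime).one_lt
  have hlt : ‖(Polynomial.X ^ N - Polynomial.C u).aeval (1 : ℤ_[p])‖ <
      ‖(Polynomial.derivative (Polynomial.X ^ N - Polynomial.C u)).aeval (1 : ℤ_[p])‖ ^ 2 := by
    have h1 : ‖1 - u‖ ≤ (p : ℝ) ^ (-((2 * (N : ℤ_[p]).valuation + 1 : ℕ) : ℤ)) := by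
      rw [norm_le_pow_iff_mem_span_pow, Ideal.mem_span_singleton, dvd_sub_comm]
      exact hu
    simp only [map_sub, map_pow, Polynomial.aeval_X, Polynomial.aeval_C, Algebra.algebraMap_self,
      RingHom.id_apply, one_pow, Polynomial.derivative_X_pow, Polynomial.derivative_C, sub_zero,
      map_mul, map_natCast, mul_one]
    refine h1.trans_lt ?_
    rw [norm_eq_zpow_neg_valuation (Nat.cast_ne_zero.2 hN), ← zpow_natCast, ← _root_.zpow_mul]
    exact zpow_lt_zpow_right₀ hp (by push_cast; omega)
  obtain ⟨x, hx, -⟩ := hensels_lemma hlt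
  exact ⟨x, by simpa [sub_eq_zero] using hx⟩

lemma span_p_pow_le_jacobson_bot {t : ℕ} (ht : t ≠ 0) :
    Ideal.span {(p : ℤ_[p]) ^ t} ≤ Ideal.jacobson ⊥ := by
  rw [IsLocalRing.jacobson_eq_maximalIdeal ⊥ bot_ne_top, maximalIdeal_eq_span_p,
    Ideal.span_singleton_le_span_singleton]
  exact dvd_pow_self _ ht

end PadicInt

-- The topology declared above for `SL_n(ℤ_p)` is Mathlib's; this restores its group instance.
instance (p n : ℕ) [Fact p.Prime] : IsTopologicalGroup (Matrix.SpecialLinearGroup (Fin n) ℤ_[p]) :=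
  Matrix.SpecialLinearGroup.topologicalGroup

open Matrix.SpecialLinearGroup

theorem closure_contains_congruence_general (p n : ℕ) [Fact p.Prime]
    (Γ : Subgroup (Matrix.SpecialLinearGroup (Fin n) ℤ)) (hΓ : Γ.FiniteIndex) :
    ∃ t : ℕ, 1 ≤ t ∧
      congSetP p n t ⊆ closure ((fun γ => iotaSL p n γ) '' (Γ : Set _)) ∧
      ∀ k, k ≤ n → ∀ V : Submodule ℚ_[p] (Fin n → ℚ_[p]),
        Module.finrank ℚ_[p] V = k →
          {W | ∃ g ∈ congSetP p n t, matActP (pMat g) V = W} ⊆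
          {W | ∃ g ∈ closure ((fun γ => iotaSL p n γ) '' (Γ : Set _)),
            matActP (pMat g) V = W} := by
  set N := Γ.normalCore.index
  have hN : N ≠ 0 := Γ.finiteIndex_normalCore.index_ne_zero
  set t := 2 * (N : ℤ_[p]).valuation + 1
  set I := Ideal.span {(p : ℤ_[p]) ^ t}
  set H := (Γ.map (iotaSL p n)).topologicalClosure
  have hdense : DenseRange (Int.castRingHom ℤ_[p]) := PadicInt.denseRange_intCast
  have htrans : ∀ i j (hij : i ≠ j), ∀ c ∈ I, transvection hij c ∈ H := by
    intro i j hij c hc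
    obtain ⟨y, rfl⟩ := (PadicInt.natCast_dvd_p_pow hN (by omega)).trans
      (Ideal.mem_span_singleton.1 hc)
    exact transvection_natCast_index_mul_mem hdense Γ hij y
  have hdiag : ∀ i j (u : ℤ_[p]ˣ), (u : ℤ_[p]) - 1 ∈ I → diagPair i j u ∈ H := by
    intro i j u hu
    obtain ⟨x, hx⟩ := PadicInt.exists_pow_eq_of_p_pow_dvd_sub_one hN
      (Ideal.mem_span_singleton.1 hu)
    have hxu : IsUnit x := (isUnit_pow_iff hN).1 (hx ▸ u.isUnit)
    rw [show u = hxu.unit ^ N from Units.ext (by simp [hx])]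
    exact diagPair_pow_index_mem hdense Γ i j _
  have hK : congSetP p n t ⊆ closure ((fun γ => iotaSL p n γ) '' (Γ : Set _)) := fun g hg =>
    congruenceSubgroup_le_of_transvection_mem_of_diagPair_mem
      (PadicInt.span_p_pow_le_jacobson_bot (by omega)) htrans hdiag
      (mem_congruenceSubgroup_iff.2 fun i j => Ideal.mem_span_singleton.2 (hg i j))
  refine ⟨t, by omega, hK, ?_⟩
  rintro k - V - _ ⟨g, hg, rfl⟩
  exact ⟨g, hK hg, rfl⟩

/-- **Proposition 2.1.**  For `n ≥ 3`, the closure of any finite-index subgroup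
`Γ ≤ SL_n(ℤ)` in `SL_n(ℤ_p)` contains a principal congruence subgroup `K_{p^t}`;
hence every ergodic component `cl(Γ)·V` on `Gr_k(ℚ_p^n)` contains the principal
congruence component `K_{p^t}·V`. -/
theorem closure_contains_congruence (p n : ℕ) [Fact p.Prime] (hn : 3 ≤ n)
    (Γ : Subgroup (Matrix.SpecialLinearGroup (Fin n) ℤ)) (hΓ : Γ.FiniteIndex) :
    ∃ t : ℕ, 1 ≤ t ∧
      congSetP p n t ⊆ closure ((fun γ => iotaSL p n γ) '' (Γ : Set _)) ∧
      ∀ k, k ≤ n → ∀ V : Submodule ℚ_[p] (Fin n → ℚ_[p]),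
        Module.finrank ℚ_[p] V = k →
          {W | ∃ g ∈ congSetP p n t, matActP (pMat g) V = W} ⊆
          {W | ∃ g ∈ closure ((fun γ => iotaSL p n γ) '' (Γ : Set _)),
            matActP (pMat g) V = W} :=
  closure_contains_congruence_general p n Γ hΓ
end

section
/- Let p be a prime, n ≥ 1, 0 ≤ k ≤ n, and t ≥ 1. Let V₀ = span_{ℚ_p}(e₁, …, e_k) ⊆ ℚ_p^n and K_{p^t} = {g ∈ SL_n(ℤ_p) : every entry of g − I lies in p^t ℤ_p}. Then the orbit K_{p^t}·V₀ consists exactly of the subspaces of the form span_{ℚ_p}{ e_j + Σ_{i=1}^{n−k} v_{i,j} e_{k+i} : 1 ≤ j ≤ k }, where v ranges over all (n−k)×k matrices all of whose entries lie in p^ت ℤ_p (equivalently, the column spaces of the block matrices [I_k; v] with p^t dividing every entry of v). -/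
open scoped MatrixGroups

/-- The standard subspace `V₀ = ℚ_p e₁ ⊕ ⋯ ⊕ ℚ_p e_k` of `ℚ_p^n`. -/
noncomputable def stdSubspace (p n k : ℕ) [Fact p.Prime] :
    Submodule ℚ_[p] (Fin n → ℚ_[p]) :=
  Submodule.span ℚ_[p] {w | ∃ i : Fin n, i.val < k ∧ w = Pi.single i 1}

/-- The vector `e_j + ∑_{i=1}^{n-k} v_{i,j} e_{k+i}`, i.e. the `j`-th column of the
block matrix `[I_k; v]`. -/
noncomputable def colVec {p : ℕ} [Fact p.Prime] {n k : ℕ}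
    (v : Matrix (Fin (n - k)) (Fin k) ℤ_[p]) (j : Fin k) : Fin n → ℚ_[p] :=
  fun a =>
    if a.val < k then (if a.val = j.val then 1 else 0)
    else if h2 : a.val - k < n - k then ((v ⟨a.val - k, h2⟩ j : ℤ_[p]) : ℚ_[p]) else 0

/-! The image of `V₀` under `g` is spanned by the first `k` columns of `g`, a block
column `[B; C]` with `B ≡ 1` and `C ≡ 0` modulo `p^t`. Since `t ≥ 1`, `B` reduces to the
identity over the residue field, so it is invertible over `ℤ_p`, and `[B; C] = [1; C B⁻¹] B`
spans the same space as `[1; C B⁻¹]`, where `C B⁻¹ ≡ 0`. Conversely `[1; v]` is the first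
block column of the lower unitriangular matrix `[1 0; v 1]`, which lies in `K_{p^t}` when
`v ≡ 0`. -/

open Matrix

theorem Matrix.range_mulVecLin_mul_of_isUnit_det {R m ι : Type*} [CommRing R] [Fintype ι]
    [DecidableEq ι] (A : Matrix m ι R) {B : Matrix ι ι R} (hB : IsUnit B.det) :
    LinearMap.range (A * B).mulVecLin = LinearMap.range A.mulVecLin := by
  rw [mulVecLin_mul, LinearMap.range_comp_of_range_eq_top]
  exact LinearMap.range_eq_top.mpr fun x =>
    ⟨B⁻¹ *ᵥ x, by simp [mulVec_mulVec, mul_nonsing_inv _ hB]⟩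

theorem Matrix.eq_fromRows_one_mul_of_isUnit_det {R m₁ m₂ : Type*} [CommRing R] [Fintype m₁]
    [DecidableEq m₁] (A : Matrix (m₁ ⊕ m₂) m₁ R) (hA : IsUnit A.toRows₁.det) :
    A = fromRows 1 (A.toRows₂ * A.toRows₁⁻¹) * A.toRows₁ := by
  rw [fromRows_mul, Matrix.one_mul, Matrix.mul_assoc, nonsing_inv_mul _ hA, Matrix.mul_one,
    fromRows_toRows]

theorem Matrix.isUnit_det_of_sub_one_mem_maximalIdeal {R ι : Type*} [CommRing R] [IsLocalRing R]
    [Fintype ι] [DecidableEq ι] {B : Matrix ι ι R}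
    (hB : ∀ i j, B i j - (1 : Matrix ι ι R) i j ∈ IsLocalRing.maximalIdeal R) :
    IsUnit B.det := by
  have hres : (IsLocalRing.residue R).mapMatrix B = 1 := by
    rw [← sub_eq_zero, ← map_one (IsLocalRing.residue R).mapMatrix, ← map_sub]
    ext i j
    exact (IsLocalRing.residue_eq_zero_iff _).mpr (hB i j)
  rw [← IsLocalRing.residue_ne_zero_iff_isUnit, RingHom.map_det, hres, det_one]
  exact one_ne_zero

theorem PadicInt.mem_maximalIdeal_of_pow_dvd {p : ℕ} [Fact p.Prime] {t : ℕ} (ht : 1 ≤ t)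
    {x : ℤ_[p]} (hx : (p : ℤ_[p]) ^ t ∣ x) : x ∈ IsLocalRing.maximalIdeal ℤ_[p] := by
  rw [PadicInt.maximalIdeal_eq_span_p, Ideal.mem_span_singleton]
  exact (dvd_pow_self _ (by omega)).trans hx

section blocks

variable {R : Type*} [CommRing R] {n k : ℕ} (hk : k ≤ n)

def finSumFinSubEquiv : Fin k ⊕ Fin (n - k) ≃ Fin n :=
  finSumFinEquiv.trans (finCongr (Nat.add_sub_cancel' hk))

@[simp]
theorem finSumFinSubEquiv_inl_val (j : Fin k) : (finSumFinSubEquiv hk (.inl j) : ℕ) = j := rfl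

@[simp]
theorem finSumFinSubEquiv_inr_val (i : Fin (n - k)) :
    (finSumFinSubEquiv hk (.inr i) : ℕ) = k + i :=
  rfl

def graphMatrix (v : Matrix (Fin (n - k)) (Fin k) R) : Matrix (Fin n) (Fin k) R :=
  (fromRows 1 v).submatrix (finSumFinSubEquiv hk).symm id

theorem graphMatrix_mul (v : Matrix (Fin (n - k)) (Fin k) R) (B : Matrix (Fin k) (Fin k) R) :
    graphMatrix hk v * B = (fromRows 1 v * B).submatrix (finSumFinSubEquiv hk).symm id := by
  rw [graphMatrix, submatrix_mul _ _ _ id _ Function.bijective_id, submatrix_id_id]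

def lowerUnitriangular (v : Matrix (Fin (n - k)) (Fin k) R) : SL(n, R) :=
  ⟨(fromBlocks 1 0 v 1).submatrix (finSumFinSubEquiv hk).symm (finSumFinSubEquiv hk).symm, by
    rw [det_submatrix_equiv_self, det_fromBlocks_zero₁₂, det_one, det_one, mul_one]⟩

theorem lowerUnitriangular_submatrix_inl (v : Matrix (Fin (n - k)) (Fin k) R) :
    (lowerUnitriangular hk v : Matrix (Fin n) (Fin n) R).submatrix id
      (finSumFinSubEquiv hk ∘ .inl) = graphMatrix hk v := by
  ext a j
  obtain ⟨x, rfl⟩ := (finSumFinSubEquiv hk).surjective a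
  cases x <;> simp [lowerUnitriangular, graphMatrix]

end blocks

variable {p : ℕ} [Fact p.Prime] {n k t : ℕ} (hk : k ≤ n)

theorem pMat_submatrix {m : Type*} (g : SL(n, ℤ_[p])) (f : m → Fin n) :
    (pMat g).submatrix id f =
      ((g : Matrix (Fin n) (Fin n) ℤ_[p]).submatrix id f).map PadicInt.Coe.ringHom :=
  rfl

theorem matActP_stdSubspace (G : Matrix (Fin n) (Fin n) ℚ_[p]) :
    matActP G (stdSubspace p n k) =
      LinearMap.range (G.submatrix id (finSumFinSubEquiv hk ∘ .inl)).mulVecLin := by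
  have hbasis : {w | ∃ i : Fin n, i.val < k ∧ w = Pi.single i 1} =
      Set.range fun j : Fin k =>
        (Pi.single (finSumFinSubEquiv hk (.inl j)) 1 : Fin n → ℚ_[p]) := by
    ext w
    constructor
    · rintro ⟨i, hi, rfl⟩
      exact ⟨⟨i, hi⟩, rfl⟩
    · rintro ⟨j, rfl⟩
      exact ⟨_, j.2, rfl⟩
  rw [matActP, stdSubspace, hbasis, Submodule.map_span, ← Set.range_comp, range_mulVecLin]
  congr 2
  ext j a
  simp

theorem span_range_colVec (v : Matrix (Fin (n - k)) (Fin k) ℤ_[p]) :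
    Submodule.span ℚ_[p] (Set.range (colVec v)) =
      LinearMap.range ((graphMatrix hk v).map PadicInt.Coe.ringHom).mulVecLin := by
  rw [range_mulVecLin]
  congr 2
  ext j a
  obtain ⟨x, rfl⟩ := (finSumFinSubEquiv hk).surjective a
  cases x <;> simp [colVec, graphMatrix, one_apply, Fin.ext_iff] <;> rfl

theorem exists_graphMatrix_of_mem_congSetP (ht : 1 ≤ t) {g : SL(n, ℤ_[p])}
    (hg : g ∈ congSetP p n t) :
    ∃ v : Matrix (Fin (n - k)) (Fin k) ℤ_[p], (∀ i j, (p : ℤ_[p]) ^ t ∣ v i j) ∧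
      matActP (pMat g) (stdSubspace p n k) =
        LinearMap.range ((graphMatrix hk v).map PadicInt.Coe.ringHom).mulVecLin := by
  set e := finSumFinSubEquiv hk
  set A := (g : Matrix (Fin n) (Fin n) ℤ_[p]).submatrix e (e ∘ .inl)
  have hB : IsUnit A.toRows₁.det := isUnit_det_of_sub_one_mem_maximalIdeal fun i j => by
    simpa [A, one_apply] using
      PadicInt.mem_maximalIdeal_of_pow_dvd ht (hg (e (.inl i)) (e (.inl j)))
  have hC : ∀ i j, (p : ℤ_[p]) ^ t ∣ A.toRows₂ i j := fun i j => by
    simpa [A, one_apply] using hg (e (.inr i)) (e (.inl j))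
  refine ⟨A.toRows₂ * A.toRows₁⁻¹,
    fun i j => by rw [mul_apply]; exact Finset.dvd_sum fun l _ => (hC i l).mul_right _, ?_⟩
  have hcols : (g : Matrix (Fin n) (Fin n) ℤ_[p]).submatrix id (e ∘ .inl) =
      graphMatrix hk (A.toRows₂ * A.toRows₁⁻¹) * A.toRows₁ := by
    rw [graphMatrix_mul, ← A.eq_fromRows_one_mul_of_isUnit_det hB]
    simp [A, e, submatrix_submatrix]
  rw [matActP_stdSubspace hk, pMat_submatrix, hcols, Matrix.map_mul,
    range_mulVecLin_mul_of_isUnit_det]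
  exact RingHom.map_det PadicInt.Coe.ringHom A.toRows₁ ▸ hB.map _

theorem lowerUnitriangular_mem_congSetP {v : Matrix (Fin (n - k)) (Fin k) ℤ_[p]}
    (hv : ∀ i j, (p : ℤ_[p]) ^ t ∣ v i j) : lowerUnitriangular hk v ∈ congSetP p n t := by
  intro a b
  obtain ⟨x, rfl⟩ := (finSumFinSubEquiv hk).surjective a
  obtain ⟨y, rfl⟩ := (finSumFinSubEquiv hk).surjective b
  cases x <;> cases y <;> simp [lowerUnitriangular, one_apply, hv]

theorem congruence_orbit_eq_general (p n k t : ℕ) [Fact p.Prime] (hk : k ≤ n)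
    (ht : 1 ≤ t) :
    {M | ∃ g ∈ congSetP p n t, matActP (pMat g) (stdSubspace p n k) = M} =
    {M | ∃ v : Matrix (Fin (n - k)) (Fin k) ℤ_[p],
      (∀ i j, (p : ℤ_[p]) ^ t ∣ v i j) ∧
      M = Submodule.span ℚ_[p] (Set.range fun j : Fin k => colVec v j)} := by
  ext M
  simp only [Set.mem_ofPred_eq, span_range_colVec hk]
  constructor
  · rintro ⟨g, hg, rfl⟩
    exact exists_graphMatrix_of_mem_congSetP hk ht hg
  · rintro ⟨v, hv, rfl⟩
    refine ⟨lowerUnitriangular hk v, lowerUnitriangular_mem_congSetP hk hv, ?_⟩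
    rw [matActP_stdSubspace hk, pMat_submatrix, lowerUnitriangular_submatrix_inl]

/-- **Description of the principal congruence components (equation (2)).**
The `K_{p^t}`-orbit of `V₀ = ℚ_p e₁ ⊕ ⋯ ⊕ ℚ_p e_k` consists exactly of the column
spaces of the block matrices `[I_k; v]` where all entries of `v` lie in
`p^t ℤ_p`. -/
theorem congruence_orbit_eq (p n k t : ℕ) [Fact p.Prime] (hn : 1 ≤ n) (hk : k ≤ n)
    (ht : 1 ≤ t) :
    {M | ∃ g ∈ congSetP p n t, matActP (pMat g) (stdSubspace p n k) = M} =
    {M | ∃ v : Matrix (Fin (n - k)) (Fin k) ℤ_[p],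
      (∀ i j, (p : ℤ_[p]) ^ t ∣ v i j) ∧
      M = Submodule.span ℚ_[p] (Set.range fun j : Fin k => colVec v j)} :=
  congruence_orbit_eq_general p n k t hk ht
end

section
/- Let p be a prime, n ≥ 1, and 0 ≤ k ≤ n. Let V₀ = span_{ℚ_p}(e₁, …, e_k), and let M₀ be the ℤ_p-submodule of ℚ_p^n generated by V₀ together with e_{k+1}, …, e_n (i.e., M₀ = V₀ ⊕ (ℤ_p e_{k+1} ⊕ ⋯ ⊕ ℤ_p e_n)). Then for every g ∈ SL_n(ℤ_p): g·M₀ = M₀ if and only if g·V₀ = V₀. -/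
open scoped MatrixGroups

/-- The image of a `ℤ_p`-submodule of `ℚ_p^n` under the matrix `A`. -/
noncomputable def zAct {p : ℕ} [Fact p.Prime] {n : ℕ} (A : Matrix (Fin n) (Fin n) ℚ_[p])
    (M : Submodule ℤ_[p] (Fin n → ℚ_[p])) : Submodule ℤ_[p] (Fin n → ℚ_[p]) :=
  M.map (A.mulVecLin.restrictScalars ℤ_[p])

/-- The standard module `M₀ = V₀ ⊕ (ℤ_p e_{k+1} ⊕ ⋯ ⊕ ℤ_p e_n)`. -/
noncomputable def stdModule (p n k : ℕ) [Fact p.Prime] :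
    Submodule ℤ_[p] (Fin n → ℚ_[p]) :=
  (stdSubspace p n k).restrictScalars ℤ_[p] ⊔
    Submodule.span ℤ_[p] {w | ∃ i : Fin n, k ≤ i.val ∧ w = Pi.single i 1}

/-!
`V₀` is the divisible part of `M₀`: a vector lies in `V₀` iff all its `ℚ_p`-multiples lie in `M₀`,
because the last `n - k` coordinates of elements of `M₀` are `p`-adic integers. Hence every linear
map sending `M₀` into itself sends `V₀` into itself. Conversely, a matrix with entries in `ℤ_p`
sending `V₀` into itself sends each `e_i` to an integral vector, which lies in `M₀`. Equality
follows by applying both inclusions to `g` and to `g⁻¹`.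
-/

theorem Submodule.map_eq_self_iff_of_comp_eq_id {R M : Type*} [Semiring R] [AddCommMonoid M]
    [Module R M] {f g : M →ₗ[R] M} (hgf : g ∘ₗ f = LinearMap.id) (hfg : f ∘ₗ g = LinearMap.id)
    (N : Submodule R M) : N.map f = N ↔ N.map f ≤ N ∧ N.map g ≤ N := by
  refine ⟨fun h => ⟨h.le, ?_⟩, fun ⟨hf, hg⟩ => le_antisymm hf ?_⟩
  · conv_lhs => rw [← h, ← Submodule.map_comp, hgf, Submodule.map_id]
  · calc N = (N.map g).map f := by rw [← Submodule.map_comp, hfg, Submodule.map_id]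
      _ ≤ N.map f := Submodule.map_mono hg

section

variable {p n k : ℕ} [Fact p.Prime]

lemma pMat_eq_mapMatrix (g : SL(n, ℤ_[p])) :
    pMat g = (PadicInt.Coe.ringHom : ℤ_[p] →+* ℚ_[p]).mapMatrix g := rfl

lemma pMat_inv_mul (g : SL(n, ℤ_[p])) : pMat g⁻¹ * pMat g = 1 := by
  rw [pMat_eq_mapMatrix, pMat_eq_mapMatrix, ← map_mul, ← Matrix.SpecialLinearGroup.coe_mul,
    inv_mul_cancel, Matrix.SpecialLinearGroup.coe_one, map_one]

lemma pMat_mul_inv (g : SL(n, ℤ_[p])) : pMat g * pMat g⁻¹ = 1 := by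
  simpa using pMat_inv_mul g⁻¹

lemma stdSubspace_eq_span_basisFun :
    stdSubspace p n k = Submodule.span ℚ_[p] (Pi.basisFun ℚ_[p] (Fin n) '' {i | i.val < k}) := by
  rw [stdSubspace, Set.image]
  congr 1
  ext w
  simp only [Set.mem_ofPred_eq, Pi.basisFun_apply]
  exact exists_congr fun i => by rw [eq_comm]

lemma mem_stdSubspace_iff {x : Fin n → ℚ_[p]} :
    x ∈ stdSubspace p n k ↔ ∀ i : Fin n, k ≤ i.val → x i = 0 := by
  rw [stdSubspace_eq_span_basisFun, Module.Basis.mem_span_image]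
  simp [Set.subset_def, not_imp_comm]

lemma single_mem_stdModule (i : Fin n) : Pi.single i (1 : ℚ_[p]) ∈ stdModule p n k := by
  by_cases hi : i.val < k
  · exact Submodule.mem_sup_left (Submodule.subset_span ⟨i, hi, rfl⟩)
  · exact Submodule.mem_sup_right (Submodule.subset_span ⟨i, le_of_not_gt hi, rfl⟩)

lemma coe_mem_stdModule (a : Fin n → ℤ_[p]) : (fun j => (a j : ℚ_[p])) ∈ stdModule p n k := by
  have h : (fun j => (a j : ℚ_[p])) = ∑ i, a i • Pi.single i (1 : ℚ_[p]) := by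
    ext j
    simp [Finset.sum_apply, Pi.single_apply, Algebra.smul_def]
  rw [h]
  exact Submodule.sum_mem _ fun i _ => Submodule.smul_mem _ _ (single_mem_stdModule i)

lemma norm_apply_le_one_of_mem_stdModule {x : Fin n → ℚ_[p]} (hx : x ∈ stdModule p n k)
    {i : Fin n} (hi : k ≤ i.val) : ‖x i‖ ≤ 1 := by
  obtain ⟨y, hy, z, hz, rfl⟩ := Submodule.mem_sup.mp hx
  have hzi : ∀ j, ‖z j‖ ≤ 1 := by
    clear hx
    induction hz using Submodule.span_induction with
    | mem w hw =>
      obtain ⟨l, -, rfl⟩ := hw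
      intro j
      by_cases h : j = l <;> simp [h]
    | zero => simp
    | add u v _ _ hu hv => exact fun j => (Padic.nonarchimedean _ _).trans (max_le (hu j) (hv j))
    | smul c u _ hu =>
      intro j
      rw [Pi.smul_apply, Algebra.smul_def, norm_mul]
      exact mul_le_one₀ (PadicInt.norm_le_one c) (norm_nonneg _) (hu j)
  rw [Pi.add_apply, mem_stdSubspace_iff.mp hy i hi, zero_add]
  exact hzi i

lemma mem_stdSubspace_iff_forall_smul_mem {x : Fin n → ℚ_[p]} :
    x ∈ stdSubspace p n k ↔ ∀ c : ℚ_[p], c • x ∈ stdModule p n k := by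
  refine ⟨fun hx c => Submodule.mem_sup_left (Submodule.smul_mem _ c hx), fun h => ?_⟩
  refine mem_stdSubspace_iff.mpr fun i hi => by_contra fun hxi => ?_
  have hp : 1 < ‖(p : ℚ_[p])⁻¹‖ := by
    rw [norm_inv, Padic.norm_p, inv_inv]
    exact_mod_cast (Fact.out : p.Prime).one_lt
  have h1 := norm_apply_le_one_of_mem_stdModule (h ((p : ℚ_[p])⁻¹ * (x i)⁻¹)) hi
  rw [Pi.smul_apply, smul_eq_mul, inv_mul_cancel_right₀ hxi] at h1
  exact hp.not_ge h1

lemma matActP_le_of_zAct_le {A : Matrix (Fin n) (Fin n) ℚ_[p]}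
    (hA : zAct A (stdModule p n k) ≤ stdModule p n k) :
    matActP A (stdSubspace p n k) ≤ stdSubspace p n k := by
  rintro _ ⟨x, hx, rfl⟩
  refine mem_stdSubspace_iff_forall_smul_mem.mpr fun c => hA ?_
  rw [← LinearMap.map_smul]
  exact ⟨c • x, mem_stdSubspace_iff_forall_smul_mem.mp hx c, rfl⟩

lemma zAct_map_le_of_matActP_le {B : Matrix (Fin n) (Fin n) ℤ_[p]}
    (hB : matActP (B.map (↑)) (stdSubspace p n k) ≤ stdSubspace p n k) :
    zAct (B.map (↑)) (stdModule p n k) ≤ stdModule p n k := by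
  rw [zAct]
  nth_rw 1 [stdModule]
  rw [Submodule.map_sup]
  refine sup_le ?_ ?_
  · rintro _ ⟨x, hx, rfl⟩
    exact Submodule.mem_sup_left (hB ⟨x, hx, rfl⟩)
  · rw [Submodule.map_span_le]
    rintro _ ⟨i, -, rfl⟩
    rw [LinearMap.restrictScalars_apply, Matrix.mulVecLin_apply, Matrix.mulVec_single_one]
    exact coe_mem_stdModule (fun j => B j i)

lemma zAct_pMat_le_iff (g : SL(n, ℤ_[p])) :
    zAct (pMat g) (stdModule p n k) ≤ stdModule p n k ↔
      matActP (pMat g) (stdSubspace p n k) ≤ stdSubspace p n k :=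
  ⟨matActP_le_of_zAct_le, zAct_map_le_of_matActP_le⟩

lemma zAct_pMat_eq_self_iff (g : SL(n, ℤ_[p])) (M : Submodule ℤ_[p] (Fin n → ℚ_[p])) :
    zAct (pMat g) M = M ↔ zAct (pMat g) M ≤ M ∧ zAct (pMat g⁻¹) M ≤ M := by
  refine Submodule.map_eq_self_iff_of_comp_eq_id ?_ ?_ M <;>
    rw [← LinearMap.restrictScalars_comp, ← Matrix.mulVecLin_mul]
  · rw [pMat_inv_mul, Matrix.mulVecLin_one]; rfl
  · rw [pMat_mul_inv, Matrix.mulVecLin_one]; rfl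

lemma matActP_pMat_eq_self_iff (g : SL(n, ℤ_[p])) (V : Submodule ℚ_[p] (Fin n → ℚ_[p])) :
    matActP (pMat g) V = V ↔ matActP (pMat g) V ≤ V ∧ matActP (pMat g⁻¹) V ≤ V := by
  refine Submodule.map_eq_self_iff_of_comp_eq_id ?_ ?_ V <;> rw [← Matrix.mulVecLin_mul]
  · rw [pMat_inv_mul, Matrix.mulVecLin_one]
  · rw [pMat_mul_inv, Matrix.mulVecLin_one]

end

theorem stdModule_stab_iff_general (p n k : ℕ) [Fact p.Prime]
    (g : Matrix.SpecialLinearGroup (Fin n) ℤ_[p]) :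
    zAct (pMat g) (stdModule p n k) = stdModule p n k ↔
      matActP (pMat g) (stdSubspace p n k) = stdSubspace p n k := by
  rw [zAct_pMat_eq_self_iff, matActP_pMat_eq_self_iff, zAct_pMat_le_iff, zAct_pMat_le_iff]

/-- **Proposition 4.4.**  For `g ∈ SL_n(ℤ_p)`, `g` stabilizes
`M₀ = V₀ ⊕ (ℤ_p e_{k+1} ⊕ ⋯ ⊕ ℤ_p e_n)` if and only if it stabilizes `V₀`. -/
theorem stdModule_stab_iff (p n k : ℕ) [Fact p.Prime] (hn : 1 ≤ n) (hk : k ≤ n)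
    (g : Matrix.SpecialLinearGroup (Fin n) ℤ_[p]) :
    zAct (pMat g) (stdModule p n k) = stdModule p n k ↔
      matActP (pMat g) (stdSubspace p n k) = stdSubspace p n k :=
  stdModule_stab_iff_general p n k g
end
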